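/- Let q ≥ 1 and J ≥ 1. The multivariate q-exponential density p(ξ | 0, C, q) = (q/2)(2π)^{-J/2} |C|^{-1/2} r^{(q/2-1)J/2} exp(-r^{q/2}/2), with r(ξ) = ξᵀ C^{-1} ξ, integrates to 1 over R^J for any symmetric positive definite J×J matrix C. -/

import Mathlib

open MeasureTheory Matrix

/-- The multivariate `q`-exponential density with mean `0` and covariance-type matrix `C`. -/
noncomputable def qEDdensity {ι : Type*} [Fintype ι] [DecidableEq ι] (q : ℝ) (C : Matrix ι ι ℝ)
    (x : ι → ℝ) : ℝ :=
  (q / 2) * (2 * Real.pi) ^ (-(Fintype.card ι : ℝ) / 2) * C.det ^ (-(1 : ℝ) / 2) *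
    (x ⬝ᵥ C⁻¹ *ᵥ x) ^ ((q / 2 - 1) * (Fintype.card ι : ℝ) / 2) *
    Real.exp (-((x ⬝ᵥ C⁻¹ *ᵥ x) ^ (q / 2)) / 2)

open Real Set
open scoped MatrixOrder

/-- The multivariate `q`-exponential density `p(ξ|0,C,q)` integrates to `1` over `ℝ^J` for any
symmetric positive definite `C`. -/
theorem stmt7 (J : ℕ) (hJ : 1 ≤ J) (q : ℝ) (hq : 1 ≤ q)
    (C : Matrix (Fin J) (Fin J) ℝ) (hC : C.PosDef) :
    ∫ ξ : Fin J → ℝ, qEDdensity q C ξ = 1 := by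
  classical
  have hq0 : (0:ℝ) < q := lt_of_lt_of_le one_pos hq
  have hJ0 : (0:ℝ) < (J:ℝ) := by exact_mod_cast hJ
  -- the symmetric square root of C
  set B := CFC.sqrt C with hBdef
  have hBB : B * B = C := CFC.sqrt_mul_sqrt_self C hC.posSemidef.nonneg
  have hdet2 : B.det * B.det = C.det := by rw [← Matrix.det_mul, hBB]
  have hBdet : 0 < B.det := by
    have h3 : B.det ≠ 0 := fun h => hC.det_pos.ne (by rw [← hdet2, h, mul_zero])
    refine lt_of_le_of_ne ?_ (Ne.symm h3)
    rw [(CFC.sqrt_nonneg C).posSemidef.1.det_eq_prod_eigenvalues]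
    exact Finset.prod_nonneg fun i _ => (CFC.sqrt_nonneg C).posSemidef.eigenvalues_nonneg i
  have hBsymm : Bᵀ = B := (CFC.sqrt_nonneg C).posSemidef.1
  -- quadratic form identity
  have hform : ∀ η : Fin J → ℝ, (B *ᵥ η) ⬝ᵥ C⁻¹ *ᵥ (B *ᵥ η) = η ⬝ᵥ η := by
    intro η
    have hCinv : C⁻¹ = B⁻¹ * B⁻¹ := by rw [← hBB, Matrix.mul_inv_rev]
    have hinvT : (B⁻¹)ᵀ = B⁻¹ := by rw [Matrix.transpose_nonsing_inv, hBsymm]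
    rw [Matrix.mulVec_mulVec, hCinv, Matrix.mul_assoc,
      Matrix.nonsing_inv_mul B hBdet.ne'.isUnit,
      Matrix.mul_one, dotProduct_mulVec, ← hinvT, Matrix.vecMul_transpose,
      Matrix.mulVec_mulVec, Matrix.nonsing_inv_mul B hBdet.ne'.isUnit, Matrix.one_mulVec]
  -- measurability of the density
  have hDmeas : Measurable (qEDdensity q C) := by
    have hQ : Measurable (fun x : Fin J → ℝ => x ⬝ᵥ C⁻¹ *ᵥ x) :=
      (continuous_id.dotProduct (continuous_const.matrix_mulVec continuous_id)).measurable
    exact (measurable_const.mul (hQ.pow_const _)).mul ((hQ.pow_const _).neg.div_const 2).exp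
  -- step 1 : change of variables ξ = B η
  have step1 : ∫ ξ : Fin J → ℝ, qEDdensity q C ξ
      = B.det * ∫ η : Fin J → ℝ, qEDdensity q C (B *ᵥ η) := by
    have hmap := Real.map_matrix_volume_pi_eq_smul_volume_pi (M := B) hBdet.ne'
    have hcont : Continuous (Matrix.toLin' B) := LinearMap.continuous_of_finiteDimensional _
    have key : ∫ η, qEDdensity q C (Matrix.toLin' B η) = (B.det)⁻¹ * ∫ ξ, qEDdensity q C ξ := by
      rw [← MeasureTheory.integral_map hcont.measurable.aemeasurable
        hDmeas.aestronglyMeasurable, hmap, integral_smul_measure, ENNReal.toReal_ofReal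
        (by positivity), abs_of_pos (inv_pos.mpr hBdet), smul_eq_mul]
    have hap : ∀ η, Matrix.toLin' B η = B *ᵥ η := fun η => Matrix.toLin'_apply B η
    simp_rw [hap] at key
    rw [key, ← mul_assoc, mul_inv_cancel₀ hBdet.ne', one_mul]
  -- the radial profile
  set f₀ : ℝ → ℝ := fun y =>
    q / 2 * (2 * π) ^ (-(J:ℝ) / 2) * C.det ^ (-(1:ℝ) / 2) *
      y ^ (2 * ((q / 2 - 1) * (J:ℝ) / 2)) * Real.exp (-(y ^ (2 * (q / 2))) / 2) with hf₀
  -- step 2 : the integrand is radial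
  have hGf : ∀ x : EuclideanSpace ℝ (Fin J),
      qEDdensity q C (B *ᵥ ((MeasurableEquiv.toLp 2 (Fin J → ℝ)).symm x)) = f₀ ‖x‖ := by
    intro x
    have hxx : ((MeasurableEquiv.toLp 2 (Fin J → ℝ)).symm x) ⬝ᵥ
        ((MeasurableEquiv.toLp 2 (Fin J → ℝ)).symm x) = ‖x‖ ^ (2:ℝ) := by
      rw [Real.rpow_two, EuclideanSpace.norm_eq, Real.sq_sqrt (by positivity)]
      simp [dotProduct, Real.norm_eq_abs, sq_abs,
        sq]
    simp only [qEDdensity, Fintype.card_fin, hform, hxx, hf₀]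
    simp only [← Real.rpow_mul (norm_nonneg x)]
  -- step 3 : reduce to a radial integral
  have step3 : ∫ η : Fin J → ℝ, qEDdensity q C (B *ᵥ η)
      = J * (Real.sqrt π ^ J / Real.Gamma (J / 2 + 1)) *
        ∫ y in Ioi (0 : ℝ), y ^ (J - 1) • f₀ y := by
    haveI : Nonempty (Fin J) := Fin.pos_iff_nonempty.mp hJ
    haveI : Nontrivial (EuclideanSpace ℝ (Fin J)) := inferInstance
    rw [← (EuclideanSpace.volume_preserving_symm_measurableEquiv_toLp (Fin J)).integral_comp'
      (fun η => qEDdensity q C (B *ᵥ η))]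
    simp_rw [hGf]
    rw [MeasureTheory.integral_fun_norm_addHaar (volume : Measure (EuclideanSpace ℝ (Fin J))) f₀]
    rw [measureReal_def, EuclideanSpace.volume_ball (x := (0 : EuclideanSpace ℝ (Fin J))) (r := 1)]
    simp only [finrank_euclideanSpace, Fintype.card_fin, ENNReal.ofReal_one, one_pow, one_mul,
      nsmul_eq_mul, smul_eq_mul]
    rw [ENNReal.toReal_ofReal (by positivity), mul_assoc]
  -- step 4 : compute the radial integral
  have hradial : ∫ y in Ioi (0 : ℝ), y ^ (J - 1) • f₀ y
      = q / 2 * (2 * π) ^ (-(J:ℝ) / 2) * C.det ^ (-(1:ℝ) / 2) *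
        (((1:ℝ)/2) ^ (-((J:ℝ)/2)) * (1/q) * Real.Gamma ((J:ℝ)/2)) := by
    have hpt : ∀ y ∈ Ioi (0:ℝ), y ^ (J - 1) • f₀ y
        = q / 2 * (2 * π) ^ (-(J:ℝ) / 2) * C.det ^ (-(1:ℝ) / 2) *
          (y ^ (q * (J:ℝ) / 2 - 1) * Real.exp (-(1/2) * y ^ q)) := by
      intro y hy
      have hy0 : (0:ℝ) < y := hy
      have h1 : y ^ ((J:ℝ) - 1) * y ^ (2 * ((q/2-1)*(J:ℝ)/2)) = y ^ (q * (J:ℝ)/2 - 1) := by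
        rw [← Real.rpow_add hy0]; congr 1; ring
      have h2 : (2:ℝ) * (q/2) = q := by ring
      rw [smul_eq_mul, hf₀]
      simp only
      rw [← Real.rpow_natCast y (J - 1), Nat.cast_sub hJ, Nat.cast_one, h2,
        show -(y ^ q)/2 = -(1/2) * y ^ q by ring, ← h1]
      ring
    rw [setIntegral_congr_fun measurableSet_Ioi hpt, MeasureTheory.integral_const_mul,
      integral_rpow_mul_exp_neg_mul_rpow hq0 (by nlinarith) (by norm_num : (0:ℝ) < 1/2)]
    have e1 : (q * (J:ℝ)/2 - 1 + 1)/q = (J:ℝ)/2 := by field_simp; ring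
    have e2 : -(q * (J:ℝ)/2 - 1 + 1)/q = -((J:ℝ)/2) := by rw [neg_div, e1]
    rw [e2, e1]
  -- final algebra
  rw [step1, step3, hradial]
  have hA1 : C.det ^ (-(1:ℝ)/2) * B.det = 1 := by
    have h1 : C.det = B.det ^ (2:ℝ) := by rw [Real.rpow_two, sq, hdet2]
    rw [h1, ← Real.rpow_mul hBdet.le, show (2:ℝ) * (-(1)/2) = -1 by norm_num,
      Real.rpow_neg_one, inv_mul_cancel₀ hBdet.ne']
  have hs : Real.sqrt π ^ J = π ^ ((J:ℝ)/2) := by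
    rw [Real.sqrt_eq_rpow, ← Real.rpow_natCast (π ^ ((1:ℝ)/2)) J, ← Real.rpow_mul pi_pos.le,
      show (1:ℝ)/2*(J:ℝ) = (J:ℝ)/2 by ring]
  have hh : ((1:ℝ)/2) ^ (-((J:ℝ)/2)) = 2 ^ ((J:ℝ)/2) := by
    rw [one_div, Real.inv_rpow zero_le_two, ← Real.rpow_neg zero_le_two, neg_neg]
  have hA2 : (2*π:ℝ) ^ (-(J:ℝ)/2) * (Real.sqrt π ^ J * ((1:ℝ)/2) ^ (-((J:ℝ)/2))) = 1 := by
    rw [hs, hh, show π ^ ((J:ℝ)/2) * 2 ^ ((J:ℝ)/2) = (2*π) ^ ((J:ℝ)/2) by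
        rw [Real.mul_rpow zero_le_two pi_pos.le]; ring,
      ← Real.rpow_add (by positivity), show -(J:ℝ)/2 + (J:ℝ)/2 = 0 by ring, Real.rpow_zero]
  have hA3 : Real.Gamma ((J:ℝ)/2 + 1) = (J:ℝ)/2 * Real.Gamma ((J:ℝ)/2) :=
    Real.Gamma_add_one (by positivity)
  have hΓ : Real.Gamma ((J:ℝ)/2) ≠ 0 := (Real.Gamma_pos_of_pos (by positivity)).ne'
  rw [hA3]
  rw [show B.det * ((J:ℝ) * (Real.sqrt π ^ J / ((J:ℝ)/2 * Real.Gamma ((J:ℝ)/2))) *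
      (q / 2 * (2 * π) ^ (-(J:ℝ) / 2) * C.det ^ (-(1:ℝ) / 2) *
        (((1:ℝ)/2) ^ (-((J:ℝ)/2)) * (1/q) * Real.Gamma ((J:ℝ)/2))))
    = (C.det ^ (-(1:ℝ)/2) * B.det) *
      ((2*π:ℝ) ^ (-(J:ℝ)/2) * (Real.sqrt π ^ J * ((1:ℝ)/2) ^ (-((J:ℝ)/2)))) *
      ((J:ℝ) * (q/2) * (1/q) * (Real.Gamma ((J:ℝ)/2) / ((J:ℝ)/2 * Real.Gamma ((J:ℝ)/2))))
    from by ring, hA1, hA2]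
  field_simp
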